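/- Each coordinate function x_i : [0,1] → [0,1] of the n-dimensional Peano curve is continuous; more precisely, for any t ∈ [0,1] and k ∈ ℕ, if u ∈ [0,1] has a ternary representation agreeing with one of t in the first i + kn digits, then |x_i(t) − x_i(u)| ≤ 3^{−(k+1)}. -/

import Mathlib

open scoped BigOperators ENNReal

/-- `Φ` : evaluation of a ternary digit sequence (digits at indices `1,2,3,…`). -/
noncomputable def Phi (t : ℕ → ℕ) : ℝ := ∑' k : ℕ, (t (k + 1) : ℝ) / 3 ^ (k + 1)

/-- A sequence of ternary digits (elements of `D = {0,1,2}`). -/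
def IsDigitSeq (t : ℕ → ℕ) : Prop := ∀ k, t k ≤ 2

/-- `S_{i+jn}(𝐭) = ∑_{k=1}^{i+jn} t_k − ∑_{s=0}^{j} t_{i+sn}`. -/
def S (n i j : ℕ) (t : ℕ → ℕ) : ℤ :=
  (∑ k ∈ Finset.Icc 1 (i + j * n), (t k : ℤ)) -
    ∑ s ∈ Finset.range (j + 1), (t (i + s * n) : ℤ)

/-- The operator `ξ(a) = 2 − a`, as a permutation of `ℝ` (so that integer powers
`ξ^m`, `m : ℤ`, make sense). -/
def xiPerm : Equiv.Perm ℝ :=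
  ⟨fun a => 2 - a, fun a => 2 - a, fun a => by dsimp; ring, fun a => by dsimp; ring⟩

/-- `x_i(𝐭) = ∑_{j=0}^∞ ξ^{S_{i+jn}(𝐭)}(t_{i+jn}) / 3^{j+1}`. -/
noncomputable def xcoord (n i : ℕ) (t : ℕ → ℕ) : ℝ :=
  ∑' j : ℕ, ((xiPerm ^ (S n i j t)) ((t (i + j * n) : ℝ))) / 3 ^ (j + 1)

/-- The canonical ternary digit expansion of `t ∈ [0,1]` (all digits `2` for `t = 1`). -/
noncomputable def ternaryDigit (t : ℝ) (k : ℕ) : ℕ :=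
  if t = 1 then 2 else (⌊t * 3 ^ k⌋).toNat % 3

/-- The `i`-th coordinate function of the `n`-dimensional Peano curve, as a function
on `[0,1]` (via the canonical ternary representation; by well-definedness this agrees
with `xcoord` on any ternary representation). -/
noncomputable def peanoCoord (n i : ℕ) (t : ℝ) : ℝ := xcoord n i (ternaryDigit t)


/-!
Changing digits of `t` only beyond position `i + k n` changes only the summands `j > k` of
`x_i`, each by at most `2 / 3^(j+1)`, hence `x_i` by at most `3^-(k+1)`.

This is an estimate on digit sequences; to read it on `[0,1]` one needs that `x_i` does not
depend on the expansion. Two different expansions of one number are twins `w (d+1) 0 0 …` and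
`w d 2 2 …`. As `0` and `2` are even, the exponents `S` of the twins have opposite parities
exactly at the positions after the digit `d`, unless `d` is itself an `i`-th coordinate digit.
In the first case `ξ` exchanges the digits `0` and `2` and the summands agree; in the second the
summands differ by `±(1, -2, -2, …) / 3^(j+1)`, which sums to zero.

All points of a closed triadic interval of length `3^-(i+kn)` have expansions with the same first
`i + k n` digits, and two points at distance at most `3^-(i+kn)` lie in one such interval or in two
adjacent ones, so `x_i` is even uniformly continuous.
-/

open Finset

namespace Real

theorem ofDigits_eq_zero_iff {b : ℕ} [NeZero b] {d : ℕ → Fin b} :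
    ofDigits d = 0 ↔ ∀ i, d i = 0 := by
  have hterm (i : ℕ) : ofDigitsTerm d i = 0 ↔ d i = 0 := by
    rw [ofDigitsTerm, mul_eq_zero, inv_eq_zero, pow_eq_zero_iff (by omega), Nat.cast_eq_zero,
      Nat.cast_eq_zero, Fin.val_eq_zero_iff, or_iff_left (NeZero.ne b)]
  rw [ofDigits, ← summable_ofDigitsTerm.hasSum_iff,
    hasSum_zero_iff_of_nonneg fun _ => ofDigitsTerm_nonneg, funext_iff]
  exact forall_congr' hterm

theorem ofDigits_eq_one_iff {b : ℕ} [NeZero b] {d : ℕ → Fin (b + 1)} :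
    ofDigits d = 1 ↔ ∀ i, d i = Fin.last b := by
  refine ⟨fun h => ?_, fun h => by simp [funext h, ofDigits_const_last_eq_one]⟩
  have hrev : ofDigits (fun i => (d i).rev) + ofDigits d = 1 := by
    rw [← ofDigits_const_last_eq_one b, ofDigits, ofDigits, ofDigits,
      ← summable_ofDigitsTerm.tsum_add summable_ofDigitsTerm]
    refine tsum_congr fun i => ?_
    have := (d i).isLt
    rw [ofDigitsTerm, ofDigitsTerm, ofDigitsTerm, ← add_mul, Fin.val_rev, Fin.val_last,
      Nat.cast_sub (by omega)]
    push_cast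
    ring
  intro i
  have := ofDigits_eq_zero_iff.mp (by linarith) i
  rwa [Fin.rev_eq_iff, Fin.rev_zero] at this

theorem eq_add_one_and_tails_of_ofDigits_eq {b : ℕ} [NeZero b] {x y : ℕ → Fin (b + 1)}
    (h : ofDigits x = ofDigits y) {m : ℕ} (hlt : ∀ i < m, x i = y i) (hm : y m < x m) :
    (x m : ℕ) = y m + 1 ∧ ∀ i, m < i → x i = 0 ∧ y i = Fin.last b := by
  have hhead : ∑ i ∈ range m, ofDigitsTerm x i = ∑ i ∈ range m, ofDigitsTerm y i :=
    sum_congr rfl fun i hi => by rw [ofDigitsTerm, ofDigitsTerm, hlt i (mem_range.mp hi)]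
  have hXY : (x m : ℝ) + ofDigits (fun i => x (i + (m + 1))) =
      y m + ofDigits (fun i => y (i + (m + 1))) := by
    rw [ofDigits_eq_sum_add_ofDigits x (m + 1), ofDigits_eq_sum_add_ofDigits y (m + 1),
      sum_range_succ, sum_range_succ, hhead, ofDigitsTerm, ofDigitsTerm] at h
    have hpos : (0 : ℝ) < ((((b + 1 : ℕ) : ℝ) ^ (m + 1))⁻¹) := by positivity
    nlinarith
  -- both tails lie in `[0, 1]` while the digits at `m` differ by at least `1`
  have hgap : (y m : ℝ) + 1 ≤ x m := by exact_mod_cast hm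
  have hX := ofDigits_nonneg fun i => x (i + (m + 1))
  have hY := ofDigits_le_one fun i => y (i + (m + 1))
  have hX0 : ofDigits (fun i => x (i + (m + 1))) = 0 := by linarith
  have hY1 : ofDigits (fun i => y (i + (m + 1))) = 1 := by linarith
  refine ⟨by exact_mod_cast (by linarith : (x m : ℝ) = y m + 1), fun i hi => ?_⟩
  obtain ⟨j, rfl⟩ : ∃ j, i = j + (m + 1) := ⟨i - (m + 1), by omega⟩
  exact ⟨ofDigits_eq_zero_iff.mp hX0 j, ofDigits_eq_one_iff.mp hY1 j⟩

/-- The common prefix is the expansion of the left endpoint `m / b ^ N`; it is followed by any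
expansion of `b ^ N * t - m ∈ [0, 1]`. -/
theorem exists_forall_mem_Icc_ofDigits_prefix {b : ℕ} (hb : 1 < b) {N m : ℕ} (hm : m < b ^ N) :
    ∃ w : ℕ → Fin b, ∀ t ∈ Set.Icc ((m : ℝ) / b ^ N) ((m + 1) / b ^ N),
      ∃ d : ℕ → Fin b, ofDigits d = t ∧ ∀ i < N, d i = w i := by
  have : NeZero b := ⟨by omega⟩
  have hbN : (0 : ℝ) < b ^ N := pow_pos (by exact_mod_cast this.pos) N
  have hmN : (m : ℝ) < b ^ N := by exact_mod_cast hm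
  have hx : (m : ℝ) / b ^ N ∈ Set.Ico 0 1 :=
    ⟨by positivity, (div_lt_one hbN).mpr hmN⟩
  have hhead := ofDigits_digits_sum_eq (b := b) hx N
  rw [mul_div_cancel₀ _ hbN.ne', Nat.floor_natCast] at hhead
  set w := digits ((m : ℝ) / b ^ N) b
  refine ⟨w, fun t ⟨ht₁, ht₂⟩ => ?_⟩
  have hr : (b : ℝ) ^ N * t - m ∈ Set.Icc 0 1 := by
    rw [div_le_iff₀ hbN] at ht₁
    rw [le_div_iff₀ hbN] at ht₂
    constructor <;> linarith
  obtain ⟨e, -, he⟩ := ofDigits_SurjOn hb hr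
  refine ⟨fun i => if i < N then w i else e (i - N), ?_, fun i hi => if_pos hi⟩
  have hprefix : ∑ i ∈ range N, ofDigitsTerm (fun i => if i < N then w i else e (i - N)) i =
      ∑ i ∈ range N, ofDigitsTerm w i :=
    sum_congr rfl fun i hi => by simp [ofDigitsTerm, mem_range.mp hi]
  have hsuffix : (fun i => if i + N < N then w (i + N) else e (i + N - N)) = e :=
    funext fun i => by simp
  rw [ofDigits_eq_sum_add_ofDigits _ N, hprefix, hsuffix, he]
  field_simp
  linarith

end Real

theorem Finset.odd_sum_of_odd_of_even {ι R : Type*} [Semiring R] {s : Finset ι} {f : ι → R}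
    {m : ι} (hm : m ∈ s) (hodd : Odd (f m)) (heven : ∀ k ∈ s, k ≠ m → Even (f k)) :
    Odd (∑ k ∈ s, f k) := by
  classical
  rw [← add_sum_erase s f hm]
  exact hodd.add_even <|
    even_sum _ fun k hk => heven k (mem_of_mem_erase hk) (ne_of_mem_erase hk)

theorem IsDigitSeq.val_ofNat {a : ℕ → ℕ} (ha : IsDigitSeq a) (k : ℕ) :
    (Fin.ofNat 3 (a k) : ℕ) = a k := by
  rw [Fin.val_ofNat]
  exact Nat.mod_eq_of_lt (Nat.lt_succ_of_le (ha k))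

theorem isDigitSeq_fin (d : ℕ → Fin 3) : IsDigitSeq fun k => d (k - 1) :=
  fun k => Nat.le_of_lt_succ (d (k - 1)).isLt

theorem isDigitSeq_ternaryDigit (t : ℝ) : IsDigitSeq (ternaryDigit t) := fun k => by
  unfold ternaryDigit
  split_ifs
  · exact le_rfl
  · omega

theorem phi_eq_ofDigits {a : ℕ → ℕ} (ha : IsDigitSeq a) :
    Phi a = Real.ofDigits fun k => Fin.ofNat 3 (a (k + 1)) :=
  tsum_congr fun k => by rw [Real.ofDigitsTerm, ha.val_ofNat, div_eq_mul_inv, Nat.cast_ofNat]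

theorem phi_fin (d : ℕ → Fin 3) : Phi (fun k => d (k - 1)) = Real.ofDigits d := by
  rw [phi_eq_ofDigits (isDigitSeq_fin d)]
  simp

theorem phi_mem_Icc {a : ℕ → ℕ} (ha : IsDigitSeq a) : Phi a ∈ Set.Icc 0 1 := by
  rw [phi_eq_ofDigits ha]
  exact ⟨Real.ofDigits_nonneg _, Real.ofDigits_le_one _⟩

theorem phi_ternaryDigit {t : ℝ} (ht : t ∈ Set.Icc 0 1) : Phi (ternaryDigit t) = t := by
  rw [phi_eq_ofDigits (isDigitSeq_ternaryDigit t)]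
  by_cases h1 : t = 1
  · subst h1
    simpa [ternaryDigit] using Real.ofDigits_const_last_eq_one 2
  · convert Real.ofDigits_digits (b := 3) (by norm_num) ⟨ht.1, lt_of_le_of_ne ht.2 h1⟩
      using 3 with k
    simp only [ternaryDigit, h1, if_false, Real.digits, Int.floor_toNat]
    ext
    simp

/-- `a = w (d+1) 0 0 0 …` and `b = w d 2 2 2 …`, the digit `d` at position `m`: the two ternary
expansions of a triadic rational. -/
structure IsTwinExpansion (a b : ℕ → ℕ) (m : ℕ) : Prop where
  one_le : 1 ≤ m
  eq_of_lt : ∀ k, 1 ≤ k → k < m → a k = b k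
  eq_succ : a m = b m + 1
  eq_zero_of_lt : ∀ k, m < k → a k = 0
  eq_two_of_lt : ∀ k, m < k → b k = 2

theorem isTwinExpansion_of_phi_eq {a b : ℕ → ℕ} (ha : IsDigitSeq a) (hb : IsDigitSeq b)
    (h : Phi a = Phi b) {m : ℕ} (hm : 1 ≤ m) (hlt : ∀ k, 1 ≤ k → k < m → a k = b k)
    (hba : b m < a m) : IsTwinExpansion a b m := by
  obtain ⟨m, rfl⟩ : ∃ l, m = l + 1 := ⟨m - 1, by omega⟩
  rw [phi_eq_ofDigits ha, phi_eq_ofDigits hb] at h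
  obtain ⟨hsucc, htail⟩ := Real.eq_add_one_and_tails_of_ofDigits_eq h (m := m)
    (fun k hk => by simp only [hlt (k + 1) (by omega) (by omega)])
    (by rw [Fin.lt_def, ha.val_ofNat, hb.val_ofNat]; exact hba)
  rw [ha.val_ofNat, hb.val_ofNat] at hsucc
  refine ⟨hm, hlt, hsucc, fun k hk => ?_, fun k hk => ?_⟩
  all_goals obtain ⟨k, rfl⟩ : ∃ l, k = l + 1 := ⟨k - 1, by omega⟩
  · have := congrArg Fin.val (htail k (by omega)).1
    rwa [ha.val_ofNat] at this
  · have := congrArg Fin.val (htail k (by omega)).2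
    rwa [hb.val_ofNat] at this

theorem xiPerm_zpow_apply (s : ℤ) (x : ℝ) :
    (xiPerm ^ s) x = 1 + (s.negOnePow : ℤ) * (x - 1) := by
  induction s using Int.induction_on generalizing x with
  | zero => simp
  | succ s ih =>
    rw [zpow_add_one, Equiv.Perm.mul_apply, ih, Int.negOnePow_succ]
    simp only [xiPerm, Equiv.coe_fn_mk, Units.val_neg, Int.cast_neg]
    ring
  | pred s ih =>
    rw [zpow_sub_one, Equiv.Perm.mul_apply, ih, Int.negOnePow_sub, Int.negOnePow_one]
    simp only [xiPerm, Equiv.Perm.inv_def, Equiv.symm, Equiv.coe_fn_mk, Units.val_mul,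
      Units.val_neg, Units.val_one, Int.cast_mul, Int.cast_neg, Int.cast_one]
    ring

theorem xiPerm_zpow_apply_mem_Icc (s : ℤ) {x : ℝ} (hx : x ∈ Set.Icc 0 2) :
    (xiPerm ^ s) x ∈ Set.Icc 0 2 := by
  rw [xiPerm_zpow_apply]
  rcases Int.units_eq_one_or s.negOnePow with h | h <;>
    · rw [h]
      constructor <;> push_cast <;> linarith [hx.1, hx.2]

theorem xiPerm_zpow_apply_sub_of_even {s s' : ℤ} (h : Even (s - s')) (x y : ℝ) :
    (xiPerm ^ s) x - (xiPerm ^ s') y = (s.negOnePow : ℤ) * (x - y) := by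
  rw [xiPerm_zpow_apply, xiPerm_zpow_apply, (Int.negOnePow_eq_iff s s').mpr h]
  ring

theorem xiPerm_zpow_apply_of_odd {s s' : ℤ} (h : Odd (s - s')) (x : ℝ) :
    (xiPerm ^ s) x = (xiPerm ^ s') (2 - x) := by
  rw [xiPerm_zpow_apply, xiPerm_zpow_apply, ← sub_add_cancel s s', Int.negOnePow_add,
    Int.negOnePow_odd _ h]
  push_cast
  ring

theorem hasSum_two_div_three_pow (c : ℕ) :
    HasSum (fun j : ℕ => (2 : ℝ) / 3 ^ (j + c + 1)) (1 / 3 ^ c) := by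
  have hterm : (fun j : ℕ => (2 : ℝ) / 3 ^ (j + c + 1)) =
      fun j => 2 / 3 ^ (c + 1) * (1 / 3) ^ j := by
    ext j
    rw [div_pow, one_pow, add_right_comm, pow_add]
    field_simp
    ring
  have hsum : (1 : ℝ) / 3 ^ c = 2 / 3 ^ (c + 1) * (1 - 1 / 3)⁻¹ := by
    rw [pow_succ]
    field_simp
    norm_num
  rw [hterm, hsum]
  exact (hasSum_geometric_of_lt_one (by norm_num) (by norm_num)).mul_left _

theorem abs_tsum_le_of_eq_zero_of_abs_le {d : ℕ → ℝ} {c : ℕ} (hzero : ∀ j < c, d j = 0)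
    (hle : ∀ j, |d j| ≤ 2 / 3 ^ (j + 1)) : |∑' j, d j| ≤ 1 / 3 ^ c := by
  have hd : Summable d := (hasSum_two_div_three_pow 0).summable.of_norm_bounded hle
  rw [← hd.sum_add_tsum_nat_add c, sum_eq_zero fun j hj => hzero j (mem_range.mp hj), zero_add,
    ← Real.norm_eq_abs]
  exact tsum_of_norm_bounded (hasSum_two_div_three_pow c) fun j => by
    simpa only [Real.norm_eq_abs, add_right_comm] using hle (j + c)

/-- The twin expansions `0.1000…` and `0.0222…` of `1/3`, shifted to position `j₁`. -/
theorem tsum_div_three_pow_eq_zero {e : ℕ → ℝ} {j₁ : ℕ} (hlt : ∀ j < j₁, e j = 0)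
    (heq : e j₁ = 1) (hgt : ∀ j, j₁ < j → e j = -2) : ∑' j, e j / 3 ^ (j + 1) = 0 := by
  have htail : HasSum (fun j => e (j + (j₁ + 1)) / 3 ^ (j + (j₁ + 1) + 1))
      (0 - ∑ j ∈ range (j₁ + 1), e j / 3 ^ (j + 1)) := by
    rw [sum_range_succ, sum_eq_zero fun j hj => by rw [hlt j (mem_range.mp hj), zero_div], heq,
      zero_add, zero_sub]
    have hterm : (fun j => e (j + (j₁ + 1)) / 3 ^ (j + (j₁ + 1) + 1)) =
        fun j => -(2 / 3 ^ (j + (j₁ + 1) + 1)) := by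
      ext j
      rw [hgt _ (by omega), neg_div]
    rw [hterm]
    exact (hasSum_two_div_three_pow (j₁ + 1)).neg
  exact ((hasSum_nat_add_iff' (j₁ + 1)).mp htail).tsum_eq

section xcoord

variable {n i : ℕ}

noncomputable def xcoordTerm (n i : ℕ) (t : ℕ → ℕ) (j : ℕ) : ℝ :=
  (xiPerm ^ S n i j t) (t (i + j * n)) / 3 ^ (j + 1)

theorem xcoord_eq_tsum (t : ℕ → ℕ) : xcoord n i t = ∑' j, xcoordTerm n i t j := rfl

theorem xcoordTerm_numerator_mem_Icc {t : ℕ → ℕ} (ht : IsDigitSeq t) (j : ℕ) :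
    (xiPerm ^ S n i j t) (t (i + j * n)) ∈ Set.Icc 0 2 :=
  xiPerm_zpow_apply_mem_Icc _ ⟨Nat.cast_nonneg _, by exact_mod_cast ht _⟩

theorem summable_xcoordTerm {t : ℕ → ℕ} (ht : IsDigitSeq t) :
    Summable (xcoordTerm n i t) := by
  refine (hasSum_two_div_three_pow 0).summable.of_nonneg_of_le (fun j => ?_) fun j => ?_
  all_goals have := xcoordTerm_numerator_mem_Icc (n := n) (i := i) ht j
  · exact div_nonneg this.1 (by positivity)
  · exact div_le_div_of_nonneg_right this.2 (by positivity)

theorem abs_xcoordTerm_sub_le {a b : ℕ → ℕ} (ha : IsDigitSeq a) (hb : IsDigitSeq b)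
    (j : ℕ) :
    |xcoordTerm n i a j - xcoordTerm n i b j| ≤ 2 / 3 ^ (j + 1) := by
  have h₁ := xcoordTerm_numerator_mem_Icc (n := n) (i := i) ha j
  have h₂ := xcoordTerm_numerator_mem_Icc (n := n) (i := i) hb j
  rw [xcoordTerm, xcoordTerm, ← sub_div, abs_div,
    abs_of_pos (a := (3 : ℝ) ^ (j + 1)) (by positivity)]
  gcongr
  exact abs_sub_le_of_nonneg_of_le h₁.1 h₁.2 h₂.1 h₂.2

theorem S_congr (hi : 1 ≤ i) {j : ℕ} {a b : ℕ → ℕ}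
    (h : ∀ k, 1 ≤ k → k ≤ i + j * n → a k = b k) : S n i j a = S n i j b := by
  unfold S
  congr 1
  · exact sum_congr rfl fun k hk => by rw [h k (mem_Icc.mp hk).1 (mem_Icc.mp hk).2]
  · refine sum_congr rfl fun s hs => ?_
    have := Nat.mul_le_mul_right n (Nat.lt_succ_iff.mp (mem_range.mp hs))
    rw [h _ (by omega) (by omega)]

theorem xcoordTerm_congr (hi : 1 ≤ i) {j : ℕ} {a b : ℕ → ℕ}
    (h : ∀ k, 1 ≤ k → k ≤ i + j * n → a k = b k) :
    xcoordTerm n i a j = xcoordTerm n i b j := by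
  rw [xcoordTerm, xcoordTerm, S_congr hi h, h _ (by omega) le_rfl]

theorem abs_xcoord_sub_le (hi : 1 ≤ i) (k : ℕ) {a b : ℕ → ℕ} (ha : IsDigitSeq a)
    (hb : IsDigitSeq b) (h : ∀ m, 1 ≤ m → m ≤ i + k * n → a m = b m) :
    |xcoord n i a - xcoord n i b| ≤ 1 / 3 ^ (k + 1) := by
  rw [xcoord_eq_tsum, xcoord_eq_tsum,
    ← (summable_xcoordTerm ha).tsum_sub (summable_xcoordTerm hb)]
  refine abs_tsum_le_of_eq_zero_of_abs_le (fun j hj => ?_) (abs_xcoordTerm_sub_le ha hb)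
  have := Nat.mul_le_mul_right n (Nat.lt_succ_iff.mp hj)
  rw [xcoordTerm_congr hi fun m hm₁ hm₂ => h m hm₁ (by omega), sub_self]

theorem S_eq_of_forall_lt_eq_zero (hn : 0 < n) {a : ℕ → ℕ} {j₁ j : ℕ}
    (ha : ∀ k, i + j₁ * n < k → a k = 0) (hj : j₁ ≤ j) : S n i j a = S n i j₁ a := by
  have hle := Nat.mul_le_mul_right n hj
  unfold S
  congr 1
  · refine (sum_subset (Icc_subset_Icc_right (by omega)) fun k hk hk' => ?_).symm
    simp only [mem_Icc, not_and, not_le] at hk hk'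
    rw [ha k (hk' hk.1), Nat.cast_zero]
  · refine (sum_subset (range_subset_range.mpr (by omega)) fun s _ hs => ?_).symm
    have := Nat.mul_lt_mul_of_pos_right (not_lt.mp (mt mem_range.mpr hs)) hn
    rw [ha _ (by omega), Nat.cast_zero]

end xcoord

namespace IsTwinExpansion

variable {n i m : ℕ} {a b : ℕ → ℕ}

/-- Below position `m` the digits of `a` and `b` agree and above it they differ by `2`, so only
position `m` contributes to the parity of the difference of the sums defining `S`. -/
theorem even_S_sub_iff (hn : 0 < n) (hi : 1 ≤ i) (h : IsTwinExpansion a b m) {j : ℕ}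
    (hj : m ≤ i + j * n) : Even (S n i j a - S n i j b) ↔ ∃ s, i + s * n = m := by
  set δ : ℕ → ℤ := fun k => a k - b k
  have hδ : ∀ k, 1 ≤ k → k ≠ m → Even (δ k) := fun k hk hkm => by
    rcases lt_or_gt_of_ne hkm with hlt | hgt
    · simp [δ, h.eq_of_lt k hk hlt]
    · simp [δ, h.eq_zero_of_lt k hgt, h.eq_two_of_lt k hgt]
  have hδm : Odd (δ m) := ⟨0, by simp [δ, h.eq_succ]⟩
  have hsum : Odd (∑ k ∈ Icc 1 (i + j * n), δ k) :=
    odd_sum_of_odd_of_even (mem_Icc.mpr ⟨h.one_le, hj⟩) hδm fun k hk hkm =>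
      hδ k (mem_Icc.mp hk).1 hkm
  have hS : S n i j a - S n i j b =
      ∑ k ∈ Icc 1 (i + j * n), δ k - ∑ s ∈ range (j + 1), δ (i + s * n) := by
    simp only [S, δ, sum_sub_distrib]
    ring
  rw [hS]
  constructor
  · intro heven
    by_contra hm
    push Not at hm
    refine Int.not_even_iff_odd.mpr (hsum.sub_even (even_sum _ fun s _ => ?_)) heven
    exact hδ _ (by omega) (hm s)
  · rintro ⟨s, rfl⟩
    have hsj : s ≤ j := Nat.le_of_mul_le_mul_right (by omega) hn
    refine hsum.sub_odd (odd_sum_of_odd_of_even (mem_range.mpr (by omega)) hδm fun s' _ hs' => ?_)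
    refine hδ _ (by omega) fun hss' => hs' ?_
    exact Nat.eq_of_mul_eq_mul_right hn (by omega)

theorem xcoordTerm_eq (hn : 0 < n) (hi : 1 ≤ i) (h : IsTwinExpansion a b m)
    (hm : ∀ s, i + s * n ≠ m) (j : ℕ) : xcoordTerm n i a j = xcoordTerm n i b j := by
  rcases lt_or_ge (i + j * n) m with hlt | hge
  · exact xcoordTerm_congr hi fun k hk₁ hk₂ => h.eq_of_lt k hk₁ (by omega)
  have hgt : m < i + j * n := lt_of_le_of_ne hge (Ne.symm (hm j))
  have hodd : Odd (S n i j a - S n i j b) :=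
    Int.not_even_iff_odd.mp fun heven => (not_exists.mpr hm) ((h.even_S_sub_iff hn hi hge).mp heven)
  rw [xcoordTerm, xcoordTerm, xiPerm_zpow_apply_of_odd hodd, h.eq_zero_of_lt _ hgt,
    h.eq_two_of_lt _ hgt]
  norm_num

theorem xcoordTerm_sub (hn : 0 < n) (hi : 1 ≤ i) {j₁ : ℕ}
    (h : IsTwinExpansion a b (i + j₁ * n)) (j : ℕ) : xcoordTerm n i a j - xcoordTerm n i b j =
      (S n i j₁ a).negOnePow * (((a (i + j * n) : ℝ) - b (i + j * n)) / 3 ^ (j + 1)) := by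
  rcases lt_or_ge j j₁ with hlt | hge
  · have := Nat.mul_lt_mul_of_pos_right hlt hn
    rw [xcoordTerm_congr hi fun k hk₁ hk₂ => h.eq_of_lt k hk₁ (by omega),
      h.eq_of_lt _ (by omega) (by omega), sub_self, sub_self, zero_div, mul_zero]
  · have hle := Nat.mul_le_mul_right n hge
    have heven := (h.even_S_sub_iff hn hi (j := j) (by omega)).mpr ⟨j₁, rfl⟩
    rw [xcoordTerm, xcoordTerm, ← sub_div, xiPerm_zpow_apply_sub_of_even heven,
      S_eq_of_forall_lt_eq_zero hn h.eq_zero_of_lt hge, mul_div_assoc]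

theorem xcoord_eq (hn : 0 < n) (hi : 1 ≤ i) (ha : IsDigitSeq a) (hb : IsDigitSeq b)
    (h : IsTwinExpansion a b m) : xcoord n i a = xcoord n i b := by
  rw [xcoord_eq_tsum, xcoord_eq_tsum]
  by_cases hm : ∃ j₁, i + j₁ * n = m
  · obtain ⟨j₁, rfl⟩ := hm
    rw [← sub_eq_zero, ← (summable_xcoordTerm ha).tsum_sub (summable_xcoordTerm hb),
      tsum_congr (h.xcoordTerm_sub hn hi), tsum_mul_left]
    refine mul_eq_zero_of_right _ (tsum_div_three_pow_eq_zero (j₁ := j₁) (fun j hj => ?_) ?_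
      fun j hj => ?_)
    · have := Nat.mul_lt_mul_of_pos_right hj hn
      rw [h.eq_of_lt _ (by omega) (by omega), sub_self]
    · rw [h.eq_succ]
      push_cast
      ring
    · have := Nat.mul_lt_mul_of_pos_right hj hn
      rw [h.eq_zero_of_lt _ (by omega), h.eq_two_of_lt _ (by omega)]
      norm_num
  · exact tsum_congr (h.xcoordTerm_eq hn hi (not_exists.mp hm))

end IsTwinExpansion

theorem xcoord_eq_of_phi_eq {n i : ℕ} (hn : 0 < n) (hi : 1 ≤ i) {a b : ℕ → ℕ}
    (ha : IsDigitSeq a) (hb : IsDigitSeq b) (h : Phi a = Phi b) : xcoord n i a = xcoord n i b := by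
  by_cases hab : ∀ k, 1 ≤ k → a k = b k
  · exact tsum_congr fun j => xcoordTerm_congr hi fun k hk _ => hab k hk
  classical
  push Not at hab
  obtain ⟨hm, hne⟩ := Nat.find_spec hab
  have hlt : ∀ k, 1 ≤ k → k < Nat.find hab → a k = b k := fun k hk hkm => by
    by_contra hne'
    exact Nat.find_min hab hkm ⟨hk, hne'⟩
  rcases lt_or_gt_of_ne hne with hab' | hba
  · exact ((isTwinExpansion_of_phi_eq hb ha h.symm hm (fun k hk hkm => (hlt k hk hkm).symm)
      hab').xcoord_eq hn hi hb ha).symm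
  · exact (isTwinExpansion_of_phi_eq ha hb h hm hlt hba).xcoord_eq hn hi ha hb

section peanoCoord

variable {n i : ℕ}

theorem peanoCoord_phi (hn : 0 < n) (hi : 1 ≤ i) {a : ℕ → ℕ} (ha : IsDigitSeq a) :
    peanoCoord n i (Phi a) = xcoord n i a :=
  xcoord_eq_of_phi_eq hn hi (isDigitSeq_ternaryDigit _) ha (phi_ternaryDigit (phi_mem_Icc ha))

theorem abs_peanoCoord_phi_sub_le (hn : 0 < n) (hi : 1 ≤ i) (k : ℕ) {a b : ℕ → ℕ}
    (ha : IsDigitSeq a) (hb : IsDigitSeq b) (h : ∀ m, 1 ≤ m → m ≤ i + k * n → a m = b m) :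
    |peanoCoord n i (Phi a) - peanoCoord n i (Phi b)| ≤ 1 / 3 ^ (k + 1) := by
  rw [peanoCoord_phi hn hi ha, peanoCoord_phi hn hi hb]
  exact abs_xcoord_sub_le hi k ha hb h

theorem abs_peanoCoord_sub_le_of_mem_Icc (hn : 0 < n) (hi : 1 ≤ i) (k m : ℕ) {t u : ℝ}
    (ht : t ∈ Set.Icc 0 1) (hu : u ∈ Set.Icc 0 1)
    (htm : t ∈ Set.Icc ((m : ℝ) / 3 ^ (i + k * n)) ((m + 1) / 3 ^ (i + k * n)))
    (hum : u ∈ Set.Icc ((m : ℝ) / 3 ^ (i + k * n)) ((m + 1) / 3 ^ (i + k * n))) :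
    |peanoCoord n i t - peanoCoord n i u| ≤ 1 / 3 ^ (k + 1) := by
  rcases lt_or_ge m (3 ^ (i + k * n)) with hm | hm
  · obtain ⟨w, hw⟩ := Real.exists_forall_mem_Icc_ofDigits_prefix (by norm_num) hm
    obtain ⟨d, rfl, hd⟩ := hw t (by exact_mod_cast htm)
    obtain ⟨e, rfl, he⟩ := hw u (by exact_mod_cast hum)
    rw [← phi_fin d, ← phi_fin e]
    exact abs_peanoCoord_phi_sub_le hn hi k (isDigitSeq_fin d) (isDigitSeq_fin e)
      fun l _ hl => by simp only [hd (l - 1) (by omega), he (l - 1) (by omega)]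
  · have h1 : 1 ≤ (m : ℝ) / 3 ^ (i + k * n) := by
      rw [one_le_div (by positivity)]
      exact_mod_cast hm
    rw [le_antisymm ht.2 (h1.trans htm.1), le_antisymm hu.2 (h1.trans hum.1), sub_self, abs_zero]
    positivity

theorem abs_peanoCoord_sub_le (hn : 0 < n) (hi : 1 ≤ i) (k : ℕ) {t u : ℝ}
    (ht : t ∈ Set.Icc 0 1) (hu : u ∈ Set.Icc 0 1) (htu : |t - u| ≤ 1 / 3 ^ (i + k * n)) :
    |peanoCoord n i t - peanoCoord n i u| ≤ 2 / 3 ^ (k + 1) := by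
  wlog htu' : t ≤ u generalizing t u
  · rw [abs_sub_comm] at htu ⊢
    exact this hu ht htu (le_of_not_ge htu')
  set N := i + k * n
  have hpos : (0 : ℝ) < 3 ^ N := by positivity
  have hut : u ≤ t + 1 / 3 ^ N := by linarith [le_abs_self (u - t), abs_sub_comm t u]
  set m := ⌊3 ^ N * t⌋₊
  have htm : t ∈ Set.Icc ((m : ℝ) / 3 ^ N) ((m + 1) / 3 ^ N) := by
    rw [Set.mem_Icc, div_le_iff₀ hpos, le_div_iff₀ hpos, mul_comm t]
    exact ⟨Nat.floor_le (by positivity [ht.1]), (Nat.lt_floor_add_one _).le⟩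
  have hsame : ∀ v ∈ Set.Icc 0 1, v ∈ Set.Icc ((m : ℝ) / 3 ^ N) ((m + 1) / 3 ^ N) →
      |peanoCoord n i t - peanoCoord n i v| ≤ 1 / 3 ^ (k + 1) :=
    fun v hv hvm => abs_peanoCoord_sub_le_of_mem_Icc hn hi k m ht hv htm hvm
  rcases le_or_gt u ((m + 1) / 3 ^ N) with hum | hum
  · exact (hsame u hu ⟨htm.1.trans htu', hum⟩).trans (by gcongr; norm_num)
  -- otherwise `t` and `u` lie in adjacent intervals, which share the point `p`
  set p : ℝ := (m + 1) / 3 ^ N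
  have hp : p ∈ Set.Icc 0 1 := ⟨by positivity, hum.le.trans hu.2⟩
  have hnext : ((m + 1 : ℕ) + 1 : ℝ) / 3 ^ N = p + 1 / 3 ^ N := by
    push_cast
    ring
  have hneighbour := abs_peanoCoord_sub_le_of_mem_Icc hn hi k (m + 1) hp hu
    ⟨by push_cast; rfl, by rw [hnext]; linarith [div_pos one_pos hpos]⟩
    ⟨by push_cast; exact hum.le, by rw [hnext]; linarith [htm.2]⟩
  calc |peanoCoord n i t - peanoCoord n i u|
      ≤ |peanoCoord n i t - peanoCoord n i p| + |peanoCoord n i p - peanoCoord n i u| :=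
        abs_sub_le _ _ _
    _ ≤ 1 / 3 ^ (k + 1) + 1 / 3 ^ (k + 1) :=
        add_le_add (hsame p hp ⟨div_le_div_of_nonneg_right (by linarith) hpos.le, le_rfl⟩)
          hneighbour
    _ = 2 / 3 ^ (k + 1) := by ring

theorem uniformContinuousOn_peanoCoord (hn : 0 < n) (hi : 1 ≤ i) :
    UniformContinuousOn (peanoCoord n i) (Set.Icc 0 1) := by
  rw [Metric.uniformContinuousOn_iff_le]
  intro ε hε
  obtain ⟨k, hk⟩ := exists_pow_lt_of_lt_one hε (by norm_num : (1 / 3 : ℝ) < 1)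
  refine ⟨1 / 3 ^ (i + k * n), by positivity, fun t ht u hu htu => ?_⟩
  rw [Real.dist_eq] at htu ⊢
  calc |peanoCoord n i t - peanoCoord n i u| ≤ 2 / 3 ^ (k + 1) :=
        abs_peanoCoord_sub_le hn hi k ht hu htu
    _ ≤ (1 / 3) ^ k := by
        rw [div_pow, one_pow, pow_succ, div_mul_eq_div_div_swap]
        gcongr
        norm_num
    _ ≤ ε := hk.le

end peanoCoord

theorem peanoCoord_continuous_general (n i : ℕ) (hn : 2 ≤ n) (hi1 : 1 ≤ i) :
    ContinuousOn (peanoCoord n i) (Set.Icc (0 : ℝ) 1) ∧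
    ∀ t u : ℝ, t ∈ Set.Icc (0 : ℝ) 1 → u ∈ Set.Icc (0 : ℝ) 1 →
      ∀ k : ℕ, ∀ a b : ℕ → ℕ, IsDigitSeq a → IsDigitSeq b → Phi a = t → Phi b = u →
        (∀ m, 1 ≤ m → m ≤ i + k * n → a m = b m) →
        |peanoCoord n i t - peanoCoord n i u| ≤ 1 / 3 ^ (k + 1) := by
  have hn₀ : 0 < n := by omega
  refine ⟨(uniformContinuousOn_peanoCoord hn₀ hi1).continuousOn, ?_⟩
  rintro t u - - k a b ha hb rfl rfl h
  exact abs_peanoCoord_phi_sub_le hn₀ hi1 k ha hb h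

/-- each coordinate function `x_i` is continuous on `[0,1]`; quantitatively,
if `t` and `u` have ternary representations agreeing in the first `i + kn` digits, then
`|x_i(t) − x_i(u)| ≤ 3^{−(k+1)}`. -/
theorem peanoCoord_continuous (n i : ℕ) (hn : 2 ≤ n) (hi1 : 1 ≤ i) (hin : i ≤ n) :
    ContinuousOn (peanoCoord n i) (Set.Icc (0 : ℝ) 1) ∧
    ∀ t u : ℝ, t ∈ Set.Icc (0 : ℝ) 1 → u ∈ Set.Icc (0 : ℝ) 1 →
      ∀ k : ℕ, ∀ a b : ℕ → ℕ, IsDigitSeq a → IsDigitSeq b → Phi a = t → Phi b = u →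
        (∀ m, 1 ≤ m → m ≤ i + k * n → a m = b m) →
        |peanoCoord n i t - peanoCoord n i u| ≤ 1 / 3 ^ (k + 1) :=
  peanoCoord_continuous_general n i hn hi1
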